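/- Let n ≥ 3. In ℤⁿ, let M be the subgroup spanned by the vectors 4e_k (for 1 ≤ k ≤ n−1) together with 2·(e₁ + ⋯ + e_n), and let N be the subgroup spanned by the vectors 4e_i (for 1 ≤ i ≤ n) together with 2^{n−1}·(e₁ + ⋯ + e_n). Then N is contained in M and the quotient group M/N is cyclic of order 2. (This computation, with coordinates recording the diagonal coefficients d_i of quadratic forms Σd_iX_i², is the final step of Proposition 4.1 of the paper showing that the group of indecomposable degree 3 invariants of (SL₂)ⁿ/μ is ℤ/2ℤ.) -/

import Mathlib

/-!
Both lattices lie in `2ℤⁿ`, and on `M` all coordinates agree modulo `4`. Since `4 ∣ 2^{n-1}`,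
`N` is exactly `4ℤⁿ`, so an element of `M` lies in `N` iff its first coordinate is divisible
by `4`. Hence `x ↦ x₀ / 2 mod 2` is a surjection `M → ℤ/2` with kernel `N`.
-/

/-- The lattice `M`, spanned by `4e_k` (`1 ≤ k ≤ n−1`) and `2(e₁ + ⋯ + e_n)`,
recording the coefficient vectors of the generators `4X_k²`, `2ΣX_i²` of `S²(T_H^*)^W`. -/
def Mlat (n : ℕ) : Submodule ℤ (Fin n → ℤ) :=
  Submodule.span ℤ
    ((Set.range fun k : Fin (n - 1) => Pi.single (k.castLE (Nat.sub_le n 1)) (4 : ℤ)) ∪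
      {fun _ : Fin n => (2 : ℤ)})

/-- The lattice `N`, spanned by `4e_i` (`1 ≤ i ≤ n`) and `2^{n−1}(e₁ + ⋯ + e_n)`,
recording the coefficient vectors of the Chern-class generators `4X_i²`, `2^{n−1}ΣX_i²`. -/
def Nlat (n : ℕ) : Submodule ℤ (Fin n → ℤ) :=
  Submodule.span ℤ
    ((Set.range fun i : Fin n => Pi.single i (4 : ℤ)) ∪
      {fun _ : Fin n => (2 : ℤ) ^ (n - 1)})

theorem Submodule.mem_span_range_single_iff {ι R : Type*} [Fintype ι] [DecidableEq ι]
    [CommSemiring R] (c : R) (x : ι → R) :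
    x ∈ Submodule.span R (Set.range fun i => Pi.single i c) ↔ ∀ i, c ∣ x i := by
  constructor
  · intro hx
    induction hx using Submodule.span_induction with
    | mem y hy =>
      obtain ⟨j, rfl⟩ := hy
      intro i
      rcases eq_or_ne i j with rfl | hij
      · simp
      · simp [hij]
    | zero => simp
    | add y z _ _ hy hz => exact fun i => dvd_add (hy i) (hz i)
    | smul a y _ hy => exact fun i => (hy i).mul_left a
  · intro hx
    choose d hd using hx
    have hsum : x = ∑ i, d i • Pi.single i c := by
      conv_lhs => rw [← Finset.univ_sum_single x]
      refine Finset.sum_congr rfl fun i _ => ?_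
      rw [← Pi.single_smul', hd i, smul_eq_mul, mul_comm]
    rw [hsum]
    exact Submodule.sum_mem _ fun i _ =>
      Submodule.smul_mem _ _ (Submodule.subset_span ⟨i, rfl⟩)

section Lattices

variable {n : ℕ}

theorem const_two_mem_Mlat : (fun _ : Fin n => (2 : ℤ)) ∈ Mlat n :=
  Submodule.subset_span (Or.inr rfl)

theorem single_four_mem_Mlat (i : Fin n) : Pi.single i (4 : ℤ) ∈ Mlat n := by
  have hlt : ∀ j : Fin n, (j : ℕ) < n - 1 → Pi.single j (4 : ℤ) ∈ Mlat n :=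
    fun j hj => Submodule.subset_span (Or.inl ⟨⟨j, hj⟩, rfl⟩)
  by_cases hi : (i : ℕ) < n - 1
  · exact hlt i hi
  -- `4e_{n-1} = 2 · (2, …, 2) - Σ_{k < n-1} 4e_k`
  have htotal : ∑ j, Pi.single j (4 : ℤ) = (2 : ℤ) • fun _ : Fin n => (2 : ℤ) := by
    rw [Finset.univ_sum_single fun _ => (4 : ℤ)]
    funext; norm_num
  have hsplit := Finset.add_sum_erase Finset.univ (fun j => Pi.single j (4 : ℤ)) (Finset.mem_univ i)
  rw [htotal] at hsplit
  rw [eq_sub_of_add_eq hsplit]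
  refine Submodule.sub_mem _ (Submodule.smul_mem _ _ const_two_mem_Mlat)
    (Submodule.sum_mem _ fun j hj => hlt j ?_)
  have := Fin.val_ne_of_ne (Finset.ne_of_mem_erase hj)
  omega

theorem two_dvd_of_mem_Mlat {x : Fin n → ℤ} (hx : x ∈ Mlat n) (i : Fin n) : 2 ∣ x i := by
  induction hx using Submodule.span_induction with
  | mem y hy =>
    rcases hy with ⟨k, rfl⟩ | rfl
    · simp only [Pi.single_apply]; split_ifs <;> norm_num
    · exact dvd_rfl
  | zero => simp
  | add y z _ _ hy hz => exact dvd_add hy hz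
  | smul a y _ hy => exact hy.mul_left a

theorem four_dvd_sub_of_mem_Mlat {x : Fin n → ℤ} (hx : x ∈ Mlat n) (i j : Fin n) :
    4 ∣ x i - x j := by
  induction hx using Submodule.span_induction with
  | mem y hy =>
    rcases hy with ⟨k, rfl⟩ | rfl
    · simp only [Pi.single_apply]; split_ifs <;> norm_num
    · simp
  | zero => simp
  | add y z _ _ hy hz => simpa [add_sub_add_comm] using dvd_add hy hz
  | smul a y _ hy => simpa [← mul_sub] using hy.mul_left a

theorem Nlat_eq_span_single (hn : 3 ≤ n) :
    Nlat n = Submodule.span ℤ (Set.range fun i : Fin n => Pi.single i (4 : ℤ)) := by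
  rw [Nlat, Submodule.span_union, sup_eq_left, Submodule.span_singleton_le_iff_mem,
    Submodule.mem_span_range_single_iff]
  intro _
  exact ⟨2 ^ (n - 3), by rw [show (4 : ℤ) = 2 ^ 2 by norm_num, ← pow_add]; congr 1; omega⟩

theorem mem_Nlat_iff (hn : 3 ≤ n) (x : Fin n → ℤ) : x ∈ Nlat n ↔ ∀ i, 4 ∣ x i := by
  rw [Nlat_eq_span_single hn, Submodule.mem_span_range_single_iff]

theorem Nlat_le_Mlat (hn : 2 ≤ n) : Nlat n ≤ Mlat n := by
  refine Submodule.span_le.mpr ?_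
  rintro x (⟨i, rfl⟩ | rfl)
  · exact single_four_mem_Mlat i
  · have hx : (fun _ : Fin n => (2 : ℤ) ^ (n - 1)) = (2 : ℤ) ^ (n - 2) • fun _ => (2 : ℤ) := by
      funext
      rw [Pi.smul_apply, smul_eq_mul, ← pow_succ]
      congr 1
      omega
    rw [hx]
    exact Submodule.smul_mem _ _ const_two_mem_Mlat

def Mlat.halfCoordMod2 (i : Fin n) : Mlat n →+ ZMod 2 where
  toFun x := ((x.1 i / 2 : ℤ) : ZMod 2)
  map_zero' := by simp
  map_add' x y := by
    simp only [Submodule.coe_add, Pi.add_apply]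
    rw [Int.add_ediv_of_dvd_left (two_dvd_of_mem_Mlat x.2 i), Int.cast_add]

theorem Mlat.halfCoordMod2_surjective (i : Fin n) :
    Function.Surjective (Mlat.halfCoordMod2 i) := by
  intro z
  fin_cases z
  · exact ⟨0, map_zero _⟩
  · exact ⟨⟨_, const_two_mem_Mlat⟩, rfl⟩

theorem Mlat.halfCoordMod2_eq_zero_iff (hn : 3 ≤ n) (i : Fin n) (x : Mlat n) :
    Mlat.halfCoordMod2 i x = 0 ↔ x.1 ∈ Nlat n := by
  have hcong := four_dvd_sub_of_mem_Mlat x.2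
  calc Mlat.halfCoordMod2 i x = 0
      ↔ 2 ∣ x.1 i / 2 := ZMod.intCast_zmod_eq_zero_iff_dvd _ 2
    _ ↔ 4 ∣ x.1 i := Int.dvd_ediv_iff_mul_dvd (two_dvd_of_mem_Mlat x.2 i)
    _ ↔ ∀ j, 4 ∣ x.1 j := ⟨fun h j => by simpa using dvd_add (hcong j i) h, fun h => h i⟩
    _ ↔ x.1 ∈ Nlat n := (mem_Nlat_iff hn _).symm

end Lattices

theorem stmt_12 (n : ℕ) (hn : 3 ≤ n) :
    Nlat n ≤ Mlat n ∧
      Nonempty ((Mlat n ⧸ (Nlat n).comap (Mlat n).subtype) ≃+ ZMod 2) := by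
  let f := (Mlat.halfCoordMod2 (⟨0, by omega⟩ : Fin n)).toIntLinearMap
  have hker : LinearMap.ker f = (Nlat n).comap (Mlat n).subtype := by
    ext x
    exact Mlat.halfCoordMod2_eq_zero_iff hn _ x
  exact ⟨Nlat_le_Mlat (by omega), ⟨((Submodule.quotEquivOfEq _ _ hker.symm).trans
    (f.quotKerEquivOfSurjective (Mlat.halfCoordMod2_surjective _))).toAddEquiv⟩⟩
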